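/- Let Ω ⊂ ℝ^N be bounded open, f ∈ H^{-1}(Ω), and let 𝔄_ad be a set of admissible matrices A = A_sym + A_skew with uniformly elliptic symmetric parts (α I ≤ A_sym ≤ β I a.e.). Suppose A_k ∈ 𝔄_ad with A_k^{skew} ∈ L^∞(Ω; Skew_N), A_k → A₀ strongly in L²(Ω; ℝ^{N×N}), and let y_k ∈ H¹₀(Ω) be the (unique) weak solutions of −div(A_k∇y_k) = f. Then {y_k} is bounded in H¹₀(Ω), and any weak H¹₀-limit ŷ of a subsequence satisfies: (A₀, ŷ) solves the limit equation, i.e., ∫_Ω (∇φ, A₀∇ŷ) dx = ⟨f, φ⟩ for all φ ∈ C^∞_c(Ω). -/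

import Mathlib

/-!
Testing the equation for `A_k` with test functions `φ_m → y_k` in `H¹₀` and using coercivity
gives `α ‖∇y_k‖² ≤ ⟨f, y_k⟩ ≤ ‖f‖ ‖∇y_k‖`, so `‖∇y_k‖ ≤ ‖f‖ / α`. The passage `φ_m → y_k` needs
`A_k ∇y_k ∈ L²`: the symmetric part of `A_k` is bounded by `β` (polarization) and the skew part
is bounded by assumption.

For the limit, split `∇φ · A_k ∇y_k = (∇φᵀ A₀) · ∇y_k + (∇φᵀ (A_k - A₀)) · ∇y_k`. Since
`∇φᵀ A₀ ∈ L²`, the first term converges by weak convergence of `∇y_k`; the second is at most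
`‖∇φ‖_∞ ‖A_k - A₀‖_{L²} ‖∇y_k‖_{L²} → 0` by Cauchy–Schwarz and the uniform bound.
-/

open MeasureTheory Filter Set Matrix
open scoped Topology

noncomputable section

/-- `i`-th partial derivative of a scalar function on `ℝ^N`. -/
def pd {N : ℕ} (i : Fin N) (φ : (Fin N → ℝ) → ℝ) (x : Fin N → ℝ) : ℝ :=
  fderiv ℝ φ x (Pi.single i 1)

/-- Gradient vector field of a scalar function on `ℝ^N`. -/
def gradv {N : ℕ} (φ : (Fin N → ℝ) → ℝ) (x : Fin N → ℝ) : Fin N → ℝ :=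
  fun i => pd i φ x

/-- Smooth test functions compactly supported in `Ω`. -/
def TestFun {N : ℕ} (Ω : Set (Fin N → ℝ)) (φ : (Fin N → ℝ) → ℝ) : Prop :=
  ContDiff ℝ (⊤ : ℕ∞) φ ∧ HasCompactSupport φ ∧ tsupport φ ⊆ Ω

/-- Membership in `H¹₀(Ω)`: `v ∈ L²(Ω)` with (weak) gradient `g ∈ L²(Ω;ℝ^N)`,
approximable by smooth compactly supported functions in the `H¹`-norm. -/
def MemH10 {N : ℕ} (Ω : Set (Fin N → ℝ)) (v : (Fin N → ℝ) → ℝ)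
    (g : (Fin N → ℝ) → Fin N → ℝ) : Prop :=
  MemLp v 2 (volume.restrict Ω) ∧ (∀ i, MemLp (fun x => g x i) 2 (volume.restrict Ω)) ∧
  ∃ φ : ℕ → (Fin N → ℝ) → ℝ, (∀ k, TestFun Ω (φ k)) ∧
    Filter.Tendsto
      (fun k => ∫ x in Ω, ((φ k x - v x) ^ 2 + ∑ i, (pd i (φ k) x - g x i) ^ 2))
      Filter.atTop (nhds 0)

section MatrixBounds

variable {m n : Type*} [Fintype m] [Fintype n]

theorem sum_sq_vecMul_le {b : m → ℝ} {K : ℝ} (hb : ∀ i, |b i| ≤ K) (D : Matrix m n ℝ) :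
    ∑ j, (b ᵥ* D) j ^ 2 ≤ Fintype.card m * K ^ 2 * ∑ i, ∑ j, D i j ^ 2 := by
  have hbsq : ∑ i, b i ^ 2 ≤ Fintype.card m * K ^ 2 := by
    simpa using Finset.sum_le_sum fun i (_ : i ∈ Finset.univ) =>
      sq_le_sq' (abs_le.1 (hb i)).1 (abs_le.1 (hb i)).2
  calc ∑ j, (b ᵥ* D) j ^ 2 ≤ ∑ j, (∑ i, b i ^ 2) * ∑ i, D i j ^ 2 :=
        Finset.sum_le_sum fun j _ => Finset.sum_mul_sq_le_sq_mul_sq _ _ _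
    _ ≤ ∑ j, (Fintype.card m * K ^ 2) * ∑ i, D i j ^ 2 := by gcongr
    _ = _ := by rw [← Finset.mul_sum, Finset.sum_comm]

theorem dotProduct_mulVec_symmPart (A : Matrix n n ℝ) (ξ : n → ℝ) :
    ξ ⬝ᵥ ((2⁻¹ : ℝ) • (A + Aᵀ)) *ᵥ ξ = ξ ⬝ᵥ A *ᵥ ξ := by
  rw [smul_mulVec, dotProduct_smul, add_mulVec, dotProduct_add, dotProduct_mulVec ξ Aᵀ,
    vecMul_transpose, dotProduct_comm (A *ᵥ ξ), smul_eq_mul]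
  ring

theorem abs_apply_le_of_quadForm_le [DecidableEq n] {S : Matrix n n ℝ} (hS : S.IsSymm) {β : ℝ}
    (h : ∀ ξ : n → ℝ, 0 ≤ ξ ⬝ᵥ S *ᵥ ξ ∧ ξ ⬝ᵥ S *ᵥ ξ ≤ β * ∑ i, ξ i ^ 2) (i j : n) :
    |S i j| ≤ β := by
  have hdiag : ∀ i, 0 ≤ S i i ∧ S i i ≤ β := fun i => by
    simpa [mulVec_single, Pi.single_apply] using h (Pi.single i 1)
  rcases eq_or_ne i j with rfl | hij
  · exact abs_le.2 ⟨by linarith [hdiag i], (hdiag i).2⟩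
  -- polarization at `eᵢ ± eⱼ`
  have hpol : ∀ s : ℝ, s ^ 2 = 1 → 0 ≤ S i i + S j j + 2 * s * S i j ∧
      S i i + S j j + 2 * s * S i j ≤ 2 * β := fun s hs => by
    have hnorm : ∑ x, (Pi.single i 1 + s • Pi.single j 1 : n → ℝ) x ^ 2 = 2 := by
      rw [Fintype.sum_eq_add i j hij fun x hx => by simp [hx.1, hx.2]]
      simp [hij.symm, hs, one_add_one_eq_two]
    have hQ := h (Pi.single i 1 + s • Pi.single j 1)
    rw [hnorm] at hQ
    simp only [mulVec_add, mulVec_smul, mulVec_single, MulOpposite.op_one, one_smul,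
      dotProduct_add, add_dotProduct, single_dotProduct, col_apply, one_mul, smul_dotProduct,
      dotProduct_smul, smul_eq_mul, hS.apply i j] at hQ
    have hform : S i i + s * S i j + s * (S i j + s * S j j) = S i i + S j j + 2 * s * S i j := by
      linear_combination S j j * hs
    exact ⟨hform ▸ hQ.1, by linarith [hform ▸ hQ.2]⟩
  have hplus := hpol 1 (by norm_num)
  have hminus := hpol (-1) (by norm_num)
  exact abs_le.2 ⟨by linarith [hdiag i], by linarith [hdiag i]⟩

theorem abs_apply_le_of_symmPart_of_skewPart [DecidableEq n] {A : Matrix n n ℝ} {β C : ℝ}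
    (hsym : ∀ ξ : n → ℝ, 0 ≤ ξ ⬝ᵥ ((2⁻¹ : ℝ) • (A + Aᵀ)) *ᵥ ξ ∧
      ξ ⬝ᵥ ((2⁻¹ : ℝ) • (A + Aᵀ)) *ᵥ ξ ≤ β * ∑ i, ξ i ^ 2)
    (hskew : ∀ i j, |((2⁻¹ : ℝ) • (A - Aᵀ)) i j| ≤ C) (i j : n) : |A i j| ≤ β + C := by
  have hS : ((2⁻¹ : ℝ) • (A + Aᵀ)).IsSymm := by
    rw [IsSymm, transpose_smul, transpose_add, transpose_transpose, add_comm]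
  have hA : A i j = ((2⁻¹ : ℝ) • (A + Aᵀ)) i j + ((2⁻¹ : ℝ) • (A - Aᵀ)) i j := by
    simp only [Matrix.smul_apply, Matrix.add_apply, Matrix.sub_apply, transpose_apply, smul_eq_mul]
    ring
  rw [hA]
  exact (abs_add_le _ _).trans (add_le_add (abs_apply_le_of_quadForm_le hS hsym i j) (hskew i j))

end MatrixBounds

theorem le_div_sq_of_mul_le_mul_sqrt {α C E : ℝ} (hα : 0 < α) (hE : 0 ≤ E)
    (h : α * E ≤ C * √E) : E ≤ (C / α) ^ 2 := by
  obtain ⟨s, hs, rfl⟩ : ∃ s, 0 ≤ s ∧ E = s ^ 2 := ⟨√E, Real.sqrt_nonneg _, (Real.sq_sqrt hE).symm⟩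
  rw [Real.sqrt_sq hs] at h
  rcases hs.eq_or_lt with rfl | hs
  · simpa using sq_nonneg (C / α)
  have hsC : s ≤ C / α := by
    rw [le_div_iff₀ hα]
    nlinarith
  exact pow_le_pow_left₀ hs.le hsC 2

section L2

variable {X : Type*} [MeasurableSpace X] {μ : Measure X} {N : ℕ}

theorem sum_sq_eq_dotProduct_self (v : Fin N → ℝ) : ∑ i, v i ^ 2 = v ⬝ᵥ v := by
  simp only [dotProduct, sq]

theorem abs_dotProduct_le_sqrt_mul_sqrt (v w : Fin N → ℝ) :
    |v ⬝ᵥ w| ≤ √(∑ i, v i ^ 2) * √(∑ i, w i ^ 2) := by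
  have h := Real.sum_mul_le_sqrt_mul_sqrt Finset.univ (fun i => |v i|) (fun i => |w i|)
  simp only [← abs_mul, sq_abs] at h
  exact (Finset.abs_sum_le_sum_abs _ _).trans h

theorem memLp_two_sqrt_sum_sq {F : X → Fin N → ℝ} (hF : ∀ i, MemLp (fun x => F x i) 2 μ) :
    MemLp (fun x => √(∑ i, F x i ^ 2)) 2 μ := by
  have hsum : Integrable (fun x => ∑ i, F x i ^ 2) μ :=
    integrable_finsetSum _ fun i _ => (hF i).integrable_sq
  refine (memLp_two_iff_integrable_sq
    (Real.continuous_sqrt.comp_aestronglyMeasurable hsum.aestronglyMeasurable)).2 ?_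
  simpa only [Real.sq_sqrt (Finset.sum_nonneg fun i _ => sq_nonneg (F _ i))] using hsum

theorem integrable_dotProduct {F G : X → Fin N → ℝ} (hF : ∀ i, MemLp (fun x => F x i) 2 μ)
    (hG : ∀ i, MemLp (fun x => G x i) 2 μ) : Integrable (fun x => F x ⬝ᵥ G x) μ :=
  integrable_finsetSum _ fun i _ => (hF i).integrable_mul (hG i)

theorem abs_integral_dotProduct_le {F G : X → Fin N → ℝ}
    (hF : ∀ i, MemLp (fun x => F x i) 2 μ) (hG : ∀ i, MemLp (fun x => G x i) 2 μ) :
    |∫ x, F x ⬝ᵥ G x ∂μ| ≤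
      √(∫ x, ∑ i, F x i ^ 2 ∂μ) * √(∫ x, ∑ i, G x i ^ 2 ∂μ) := by
  have hsq : ∀ H : X → Fin N → ℝ, ∫ x, √(∑ i, H x i ^ 2) ^ (2 : ℝ) ∂μ = ∫ x, ∑ i, H x i ^ 2 ∂μ :=
    fun H => integral_congr_ae <| .of_forall fun x => by
      simp only [Real.rpow_two, Real.sq_sqrt (Finset.sum_nonneg fun i _ => sq_nonneg (H x i))]
  have hCS := integral_mul_le_Lp_mul_Lq_of_nonneg Real.HolderConjugate.two_two
    (.of_forall fun _ => Real.sqrt_nonneg _) (.of_forall fun _ => Real.sqrt_nonneg _)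
    (by simpa using memLp_two_sqrt_sum_sq hF) (by simpa using memLp_two_sqrt_sum_sq hG)
  rw [hsq, hsq, ← Real.sqrt_eq_rpow, ← Real.sqrt_eq_rpow] at hCS
  calc |∫ x, F x ⬝ᵥ G x ∂μ| ≤ ∫ x, |F x ⬝ᵥ G x| ∂μ := abs_integral_le_integral_abs
    _ ≤ ∫ x, √(∑ i, F x i ^ 2) * √(∑ i, G x i ^ 2) ∂μ :=
      integral_mono (integrable_dotProduct hF hG).abs
        ((memLp_two_sqrt_sum_sq hF).integrable_mul (memLp_two_sqrt_sum_sq hG))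
        fun x => abs_dotProduct_le_sqrt_mul_sqrt (F x) (G x)
    _ ≤ _ := hCS

theorem tendsto_integral_dotProduct_of_tendsto {F : ℕ → X → Fin N → ℝ} {G H : X → Fin N → ℝ}
    (hF : ∀ m i, MemLp (fun x => F m x i) 2 μ) (hG : ∀ i, MemLp (fun x => G x i) 2 μ)
    (hH : ∀ i, MemLp (fun x => H x i) 2 μ)
    (hFG : Tendsto (fun m => ∫ x, ∑ i, (F m x i - G x i) ^ 2 ∂μ) atTop (𝓝 0)) :
    Tendsto (fun m => ∫ x, F m x ⬝ᵥ H x ∂μ) atTop (𝓝 (∫ x, G x ⬝ᵥ H x ∂μ)) := by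
  rw [← tendsto_sub_nhds_zero_iff]
  have hbound : Tendsto (fun m => √(∫ x, ∑ i, (F m x i - G x i) ^ 2 ∂μ) *
      √(∫ x, ∑ i, H x i ^ 2 ∂μ)) atTop (𝓝 0) := by
    simpa using hFG.sqrt.mul_const _
  refine squeeze_zero_norm (fun m => ?_) hbound
  rw [Real.norm_eq_abs, ← integral_sub (integrable_dotProduct (hF m) hH)
    (integrable_dotProduct hG hH)]
  simpa only [sub_dotProduct, Pi.sub_apply] using
    abs_integral_dotProduct_le (F := fun x => F m x - G x) (fun i => (hF m i).sub (hG i)) hH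

theorem tendsto_integral_sum_sq_of_tendsto {F : ℕ → X → Fin N → ℝ} {G : X → Fin N → ℝ}
    (hF : ∀ m i, MemLp (fun x => F m x i) 2 μ) (hG : ∀ i, MemLp (fun x => G x i) 2 μ)
    (hFG : Tendsto (fun m => ∫ x, ∑ i, (F m x i - G x i) ^ 2 ∂μ) atTop (𝓝 0)) :
    Tendsto (fun m => ∫ x, ∑ i, F m x i ^ 2 ∂μ) atTop (𝓝 (∫ x, ∑ i, G x i ^ 2 ∂μ)) := by
  have hdiff : ∀ m, Integrable (fun x => ∑ i, (F m x i - G x i) ^ 2) μ :=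
    fun m => integrable_finsetSum _ fun i _ => ((hF m i).sub (hG i)).integrable_sq
  have hexpand : ∀ m, ∫ x, ∑ i, F m x i ^ 2 ∂μ = ∫ x, ∑ i, (F m x i - G x i) ^ 2 ∂μ
      + 2 * ∫ x, F m x ⬝ᵥ G x ∂μ - ∫ x, ∑ i, G x i ^ 2 ∂μ := by
    intro m
    have hpt : ∀ x, ∑ i, F m x i ^ 2 =
        ∑ i, (F m x i - G x i) ^ 2 + 2 * (F m x ⬝ᵥ G x) - ∑ i, G x i ^ 2 := by
      intro x
      simp only [dotProduct, Finset.mul_sum, ← Finset.sum_add_distrib, ← Finset.sum_sub_distrib]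
      exact Finset.sum_congr rfl fun i _ => by ring
    have hdot : Integrable (fun x => 2 * (F m x ⬝ᵥ G x)) μ :=
      (integrable_dotProduct (hF m) hG).const_mul 2
    have hsum : Integrable (fun x => ∑ i, (F m x i - G x i) ^ 2 + 2 * (F m x ⬝ᵥ G x)) μ :=
      (hdiff m).add hdot
    rw [integral_congr_ae (.of_forall hpt),
      integral_sub hsum (integrable_finsetSum _ fun i _ => (hG i).integrable_sq),
      integral_add (hdiff m) hdot, integral_const_mul]
  have hlim := (hFG.add ((tendsto_integral_dotProduct_of_tendsto hF hG hG hFG).const_mul 2)).sub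
    (tendsto_const_nhds (x := ∫ x, ∑ i, G x i ^ 2 ∂μ))
  simp only [← hexpand, ← sum_sq_eq_dotProduct_self] at hlim
  convert hlim using 2
  ring

theorem integral_sum_sq_le_div_sq_of_coercive {α C : ℝ} (hα : 0 < α)
    {A : X → Matrix (Fin N) (Fin N) ℝ} {g : X → Fin N → ℝ}
    (hg : ∀ i, MemLp (fun x => g x i) 2 μ) (hAg : ∀ i, MemLp (fun x => (A x *ᵥ g x) i) 2 μ)
    (hcoer : ∀ᵐ x ∂μ, α * ∑ i, g x i ^ 2 ≤ g x ⬝ᵥ A x *ᵥ g x)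
    {F : ℕ → X → Fin N → ℝ} (hF : ∀ m i, MemLp (fun x => F m x i) 2 μ)
    (hFg : Tendsto (fun m => ∫ x, ∑ i, (F m x i - g x i) ^ 2 ∂μ) atTop (𝓝 0))
    (hbound : ∀ m, ∫ x, F m x ⬝ᵥ A x *ᵥ g x ∂μ ≤ C * √(∫ x, ∑ i, F m x i ^ 2 ∂μ)) :
    ∫ x, ∑ i, g x i ^ 2 ∂μ ≤ (C / α) ^ 2 := by
  refine le_div_sq_of_mul_le_mul_sqrt hα
    (integral_nonneg fun x => Finset.sum_nonneg fun i _ => sq_nonneg _) ?_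
  calc α * ∫ x, ∑ i, g x i ^ 2 ∂μ ≤ ∫ x, g x ⬝ᵥ A x *ᵥ g x ∂μ := by
        rw [← integral_const_mul]
        exact integral_mono_ae
          ((integrable_finsetSum _ fun i _ => (hg i).integrable_sq).const_mul α)
          (integrable_dotProduct hg hAg) hcoer
    _ ≤ C * √(∫ x, ∑ i, g x i ^ 2 ∂μ) :=
        le_of_tendsto_of_tendsto' (tendsto_integral_dotProduct_of_tendsto hF hg hAg hFg)
          ((tendsto_integral_sum_sq_of_tendsto hF hg hFg).sqrt.const_mul C) hbound

theorem memLp_mulVec_of_ae_bound {A : X → Matrix (Fin N) (Fin N) ℝ} {C : ℝ}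
    (hA : ∀ i j, AEStronglyMeasurable (fun x => A x i j) μ)
    (hAC : ∀ᵐ x ∂μ, ∀ i j, |A x i j| ≤ C) {g : X → Fin N → ℝ}
    (hg : ∀ j, MemLp (fun x => g x j) 2 μ) (i : Fin N) :
    MemLp (fun x => (A x *ᵥ g x) i) 2 μ :=
  memLp_finsetSum Finset.univ fun j _ => (hg j).mul' (memLp_top_of_bound (hA i j) C
    (by filter_upwards [hAC] with x hx using hx i j))

theorem memLp_vecMul_of_ae_bound {b : X → Fin N → ℝ} {K : ℝ}
    (hb : ∀ i, AEStronglyMeasurable (fun x => b x i) μ) (hbK : ∀ᵐ x ∂μ, ∀ i, |b x i| ≤ K)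
    {B : X → Matrix (Fin N) (Fin N) ℝ} (hB : ∀ i j, MemLp (fun x => B x i j) 2 μ) (j : Fin N) :
    MemLp (fun x => (b x ᵥ* B x) j) 2 μ :=
  memLp_finsetSum Finset.univ fun i _ => (hB i j).mul' (memLp_top_of_bound (hb i) K
    (by filter_upwards [hbK] with x hx using hx i))

theorem integral_sum_sq_vecMul_le {b : X → Fin N → ℝ} {K : ℝ} (hbK : ∀ᵐ x ∂μ, ∀ i, |b x i| ≤ K)
    {D : X → Matrix (Fin N) (Fin N) ℝ} (hD : ∀ i j, MemLp (fun x => D x i j) 2 μ)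
    (hbD : ∀ j, MemLp (fun x => (b x ᵥ* D x) j) 2 μ) :
    ∫ x, ∑ j, (b x ᵥ* D x) j ^ 2 ∂μ ≤ N * K ^ 2 * ∫ x, ∑ i, ∑ j, D x i j ^ 2 ∂μ := by
  rw [← integral_const_mul]
  refine integral_mono_ae (integrable_finsetSum _ fun j _ => (hbD j).integrable_sq)
    ((integrable_finsetSum _ fun i _ => integrable_finsetSum _ fun j _ =>
      (hD i j).integrable_sq).const_mul _) ?_
  filter_upwards [hbK] with x hx
  simpa using sum_sq_vecMul_le hx (D x)

theorem tendsto_integral_dotProduct_mulVec_of_weak {b : X → Fin N → ℝ} {K : ℝ}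
    (hb : ∀ i, AEStronglyMeasurable (fun x => b x i) μ) (hbK : ∀ᵐ x ∂μ, ∀ i, |b x i| ≤ K)
    {B : ℕ → X → Matrix (Fin N) (Fin N) ℝ} {B₀ : X → Matrix (Fin N) (Fin N) ℝ}
    (hB : ∀ k i j, MemLp (fun x => B k x i j) 2 μ) (hB₀ : ∀ i j, MemLp (fun x => B₀ x i j) 2 μ)
    (hBB₀ : Tendsto (fun k => ∫ x, ∑ i, ∑ j, (B k x i j - B₀ x i j) ^ 2 ∂μ) atTop (𝓝 0))
    {g : ℕ → X → Fin N → ℝ} {g₀ : X → Fin N → ℝ} (hg : ∀ k i, MemLp (fun x => g k x i) 2 μ)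
    {M : ℝ} (hgM : ∀ k, ∫ x, ∑ i, g k x i ^ 2 ∂μ ≤ M)
    (hweak : ∀ h : X → Fin N → ℝ, (∀ i, MemLp (fun x => h x i) 2 μ) →
      Tendsto (fun k => ∫ x, g k x ⬝ᵥ h x ∂μ) atTop (𝓝 (∫ x, g₀ x ⬝ᵥ h x ∂μ))) :
    Tendsto (fun k => ∫ x, b x ⬝ᵥ B k x *ᵥ g k x ∂μ) atTop
      (𝓝 (∫ x, b x ⬝ᵥ B₀ x *ᵥ g₀ x ∂μ)) := by
  have hD : ∀ k i j, MemLp (fun x => (B k x - B₀ x) i j) 2 μ :=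
    fun k i j => (hB k i j).sub (hB₀ i j)
  have hbD := fun k => memLp_vecMul_of_ae_bound hb hbK (hD k)
  have hbB₀ := memLp_vecMul_of_ae_bound hb hbK hB₀
  have hswap : ∀ (B' : X → Matrix (Fin N) (Fin N) ℝ) (g' : X → Fin N → ℝ),
      ∫ x, b x ⬝ᵥ B' x *ᵥ g' x ∂μ = ∫ x, g' x ⬝ᵥ b x ᵥ* B' x ∂μ := fun B' g' =>
    integral_congr_ae (.of_forall fun x => (dotProduct_mulVec _ _ _).trans (dotProduct_comm _ _))
  have hsplit : ∀ k, ∫ x, b x ⬝ᵥ B k x *ᵥ g k x ∂μ =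
      ∫ x, g k x ⬝ᵥ b x ᵥ* (B k x - B₀ x) ∂μ + ∫ x, g k x ⬝ᵥ b x ᵥ* B₀ x ∂μ := fun k => by
    rw [hswap, ← integral_add (integrable_dotProduct (hg k) (hbD k))
      (integrable_dotProduct (hg k) hbB₀)]
    simp only [vecMul_sub, dotProduct_sub, sub_add_cancel]
  have hsmall : Tendsto (fun k => ∫ x, g k x ⬝ᵥ b x ᵥ* (B k x - B₀ x) ∂μ) atTop (𝓝 0) := by
    have hbound : Tendsto
        (fun k => √M * √(N * K ^ 2 * ∫ x, ∑ i, ∑ j, (B k x i j - B₀ x i j) ^ 2 ∂μ))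
        atTop (𝓝 0) := by
      simpa using ((hBB₀.const_mul _).sqrt).const_mul √M
    refine squeeze_zero_norm (fun k => ?_) hbound
    exact (abs_integral_dotProduct_le (hg k) (hbD k)).trans (mul_le_mul
      (Real.sqrt_le_sqrt (hgM k)) (Real.sqrt_le_sqrt (integral_sum_sq_vecMul_le hbK (hD k) (hbD k)))
      (Real.sqrt_nonneg _) (Real.sqrt_nonneg _))
  rw [hswap]
  simpa only [hsplit, zero_add] using hsmall.add (hweak _ hbB₀)

end L2

section WeakSolutions

variable {N : ℕ} {Ω : Set (Fin N → ℝ)}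

theorem TestFun.continuous_pd {φ : (Fin N → ℝ) → ℝ} (hφ : TestFun Ω φ) (i : Fin N) :
    Continuous (pd i φ) :=
  (hφ.1.continuous_fderiv (by simp)).clm_apply continuous_const

theorem TestFun.hasCompactSupport_pd {φ : (Fin N → ℝ) → ℝ} (hφ : TestFun Ω φ) (i : Fin N) :
    HasCompactSupport (pd i φ) :=
  hφ.2.1.fderiv_apply (𝕜 := ℝ) _

theorem TestFun.memLp {φ : (Fin N → ℝ) → ℝ} (hφ : TestFun Ω φ) (μ : Measure (Fin N → ℝ))
    [IsFiniteMeasureOnCompacts μ] (p : ENNReal) : MemLp φ p μ :=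
  hφ.1.continuous.memLp_of_hasCompactSupport hφ.2.1

theorem TestFun.memLp_pd {φ : (Fin N → ℝ) → ℝ} (hφ : TestFun Ω φ) (μ : Measure (Fin N → ℝ))
    [IsFiniteMeasureOnCompacts μ] (p : ENNReal) (i : Fin N) : MemLp (pd i φ) p μ :=
  (hφ.continuous_pd i).memLp_of_hasCompactSupport (hφ.hasCompactSupport_pd i)

theorem TestFun.exists_bound_pd {φ : (Fin N → ℝ) → ℝ} (hφ : TestFun Ω φ) :
    ∃ C, ∀ x i, |pd i φ x| ≤ C := by
  obtain ⟨C, hC⟩ := (continuous_pi hφ.continuous_pd).bounded_above_of_compact_support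
    (hφ.2.1.fderiv (𝕜 := ℝ) |>.comp_left (g := fun L : (Fin N → ℝ) →L[ℝ] ℝ =>
      fun i => L (Pi.single i 1)) rfl)
  exact ⟨C, fun x i => (norm_le_pi_norm (gradv φ x) i).trans (hC x)⟩

theorem MemH10.exists_tendsto_pd {v : (Fin N → ℝ) → ℝ} {g : (Fin N → ℝ) → Fin N → ℝ}
    (h : MemH10 Ω v g) : ∃ φ : ℕ → (Fin N → ℝ) → ℝ, (∀ m, TestFun Ω (φ m)) ∧
      Tendsto (fun m => ∫ x in Ω, ∑ i, (pd i (φ m) x - g x i) ^ 2) atTop (𝓝 0) := by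
  obtain ⟨hv, hg, φ, hφ, hconv⟩ := h
  refine ⟨φ, hφ, squeeze_zero (fun m => integral_nonneg fun x =>
    Finset.sum_nonneg fun i _ => sq_nonneg _) (fun m => ?_) hconv⟩
  have hpd : Integrable (fun x => ∑ i, (pd i (φ m) x - g x i) ^ 2) (volume.restrict Ω) :=
    integrable_finsetSum _ fun i _ => (((hφ m).memLp_pd _ 2 i).sub (hg i)).integrable_sq
  exact integral_mono hpd ((((hφ m).memLp _ 2).sub hv).integrable_sq.add hpd)
    fun x => le_add_of_nonneg_left (sq_nonneg _)

/-- `-div (A g) = Λ` weakly in `Ω`, where `g` stands for the gradient of the solution. -/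
def IsWeakSolution (Ω : Set (Fin N → ℝ)) (A : (Fin N → ℝ) → Matrix (Fin N) (Fin N) ℝ)
    (g : (Fin N → ℝ) → Fin N → ℝ) (Λ : ((Fin N → ℝ) → ℝ) → ℝ) : Prop :=
  ∀ φ, TestFun Ω φ → ∫ x in Ω, gradv φ x ⬝ᵥ A x *ᵥ g x = Λ φ

theorem IsWeakSolution.integral_sum_sq_le {A : (Fin N → ℝ) → Matrix (Fin N) (Fin N) ℝ}
    {y : (Fin N → ℝ) → ℝ} {g : (Fin N → ℝ) → Fin N → ℝ} {Λ : ((Fin N → ℝ) → ℝ) → ℝ}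
    {α Cf C : ℝ} (hsol : IsWeakSolution Ω A g Λ) (hyg : MemH10 Ω y g)
    (hΛ : ∀ φ, TestFun Ω φ → |Λ φ| ≤ Cf * √(∫ x in Ω, ∑ i, pd i φ x ^ 2)) (hα : 0 < α)
    (hcoer : ∀ᵐ x ∂(volume.restrict Ω), ∀ ξ, α * ∑ i, ξ i ^ 2 ≤ ξ ⬝ᵥ A x *ᵥ ξ)
    (hA : ∀ i j, AEStronglyMeasurable (fun x => A x i j) (volume.restrict Ω))
    (hAC : ∀ᵐ x ∂(volume.restrict Ω), ∀ i j, |A x i j| ≤ C) :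
    ∫ x in Ω, ∑ i, g x i ^ 2 ≤ (Cf / α) ^ 2 := by
  obtain ⟨φ, hφ, hφg⟩ := hyg.exists_tendsto_pd
  exact integral_sum_sq_le_div_sq_of_coercive hα hyg.2.1 (memLp_mulVec_of_ae_bound hA hAC hyg.2.1)
    (hcoer.mono fun x hx => hx (g x)) (F := fun m => gradv (φ m))
    (fun m => (hφ m).memLp_pd _ 2) hφg
    fun m => (hsol (φ m) (hφ m)).trans_le ((le_abs_self _).trans (hΛ _ (hφ m)))

theorem IsWeakSolution.of_tendsto {A : ℕ → (Fin N → ℝ) → Matrix (Fin N) (Fin N) ℝ}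
    {A₀ : (Fin N → ℝ) → Matrix (Fin N) (Fin N) ℝ} {g : ℕ → (Fin N → ℝ) → Fin N → ℝ}
    {g₀ : (Fin N → ℝ) → Fin N → ℝ} {Λ : ((Fin N → ℝ) → ℝ) → ℝ} {M : ℝ}
    (hsol : ∀ k, IsWeakSolution Ω (A k) (g k) Λ)
    (hA : ∀ k i j, MemLp (fun x => A k x i j) 2 (volume.restrict Ω))
    (hA₀ : ∀ i j, MemLp (fun x => A₀ x i j) 2 (volume.restrict Ω))
    (hAA₀ : Tendsto (fun k => ∫ x in Ω, ∑ i, ∑ j, (A k x i j - A₀ x i j) ^ 2) atTop (𝓝 0))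
    (hg : ∀ k i, MemLp (fun x => g k x i) 2 (volume.restrict Ω))
    (hgM : ∀ k, ∫ x in Ω, ∑ i, g k x i ^ 2 ≤ M)
    (hweak : ∀ h : (Fin N → ℝ) → Fin N → ℝ, (∀ i, MemLp (fun x => h x i) 2 (volume.restrict Ω)) →
      Tendsto (fun k => ∫ x in Ω, g k x ⬝ᵥ h x) atTop (𝓝 (∫ x in Ω, g₀ x ⬝ᵥ h x))) :
    IsWeakSolution Ω A₀ g₀ Λ := by
  intro φ hφ
  obtain ⟨K, hK⟩ := hφ.exists_bound_pd
  have hlim := tendsto_integral_dotProduct_mulVec_of_weak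
    (fun i => (hφ.continuous_pd i).aestronglyMeasurable) (.of_forall fun x i => hK x i)
    hA hA₀ hAA₀ hg hgM hweak
  exact tendsto_nhds_unique (hlim.congr fun k => hsol k φ hφ) tendsto_const_nhds

end WeakSolutions

theorem statement19_general {N : ℕ} (Ω : Set (Fin N → ℝ)) (α β : ℝ) (hα : 0 < α)
    -- `f ∈ H⁻¹(Ω)`
    (Λ : ((Fin N → ℝ) → ℝ) → ℝ) (Cf : ℝ)
    (hΛ : ∀ φ, TestFun Ω φ →
      |Λ φ| ≤ Cf * Real.sqrt (∫ x in Ω, ∑ i, (pd i φ x) ^ 2))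
    (Ak : ℕ → (Fin N → ℝ) → Matrix (Fin N) (Fin N) ℝ)
    (A₀ : (Fin N → ℝ) → Matrix (Fin N) (Fin N) ℝ)
    (hL2 : ∀ i j, MemLp (fun x => A₀ x i j) 2 (volume.restrict Ω))
    (hkL2 : ∀ k i j, MemLp (fun x => Ak k x i j) 2 (volume.restrict Ω))
    (hell : ∀ k, ∀ᵐ x ∂(volume.restrict Ω), ∀ ξ : Fin N → ℝ,
      α * (∑ i, ξ i ^ 2) ≤
        dotProduct ξ (((2⁻¹ : ℝ) • (Ak k x + (Ak k x)ᵀ)).mulVec ξ) ∧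
      dotProduct ξ (((2⁻¹ : ℝ) • (Ak k x + (Ak k x)ᵀ)).mulVec ξ) ≤
        β * (∑ i, ξ i ^ 2))
    (hskewbd : ∀ k, ∃ C : ℝ, ∀ᵐ x ∂(volume.restrict Ω), ∀ i j,
      |((2⁻¹ : ℝ) • (Ak k x - (Ak k x)ᵀ)) i j| ≤ C)
    (hstrong : Tendsto
      (fun k => ∫ x in Ω, ∑ i, ∑ j, (Ak k x i j - A₀ x i j) ^ 2) atTop (𝓝 0))
    (yk : ℕ → (Fin N → ℝ) → ℝ) (gk : ℕ → (Fin N → ℝ) → Fin N → ℝ)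
    (hyk : ∀ k, MemH10 Ω (yk k) (gk k))
    (hsol : ∀ k, ∀ φ, TestFun Ω φ →
      ∫ x in Ω, dotProduct (gradv φ x) ((Ak k x).mulVec (gk k x)) = Λ φ) :
    -- boundedness in H¹₀
    (∃ M : ℝ, ∀ k, ∫ x in Ω, ∑ i, (gk k x i) ^ 2 ≤ M) ∧
    -- any weak H¹₀-limit of a subsequence solves the limit equation
    ∀ (yh : (Fin N → ℝ) → ℝ) (gh : (Fin N → ℝ) → Fin N → ℝ) (ns : ℕ → ℕ),
      StrictMono ns → MemH10 Ω yh gh →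
      (∀ h : (Fin N → ℝ) → Fin N → ℝ,
        (∀ i, MemLp (fun x => h x i) 2 (volume.restrict Ω)) →
        Tendsto (fun k => ∫ x in Ω, dotProduct (gk (ns k) x) (h x)) atTop
          (𝓝 (∫ x in Ω, dotProduct (gh x) (h x)))) →
      (∀ w : (Fin N → ℝ) → ℝ, MemLp w 2 (volume.restrict Ω) →
        Tendsto (fun k => ∫ x in Ω, yk (ns k) x * w x) atTop
          (𝓝 (∫ x in Ω, yh x * w x))) →
      ∀ φ, TestFun Ω φ →
        ∫ x in Ω, dotProduct (gradv φ x) ((A₀ x).mulVec (gh x)) = Λ φ := by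
  have hcoer : ∀ k, ∀ᵐ x ∂(volume.restrict Ω), ∀ ξ, α * ∑ i, ξ i ^ 2 ≤ ξ ⬝ᵥ Ak k x *ᵥ ξ :=
    fun k => by
      filter_upwards [hell k] with x hx ξ
      exact dotProduct_mulVec_symmPart (Ak k x) ξ ▸ (hx ξ).1
  have hbdd : ∀ k, ∃ C, ∀ᵐ x ∂(volume.restrict Ω), ∀ i j, |Ak k x i j| ≤ C := fun k => by
    obtain ⟨C, hC⟩ := hskewbd k
    refine ⟨β + C, ?_⟩
    filter_upwards [hell k, hC] with x hx hCx
    exact abs_apply_le_of_symmPart_of_skewPart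
      (fun ξ => ⟨(by positivity : 0 ≤ α * ∑ i, ξ i ^ 2).trans (hx ξ).1, (hx ξ).2⟩) hCx
  have henergy : ∀ k, ∫ x in Ω, ∑ i, gk k x i ^ 2 ≤ (Cf / α) ^ 2 := fun k => by
    obtain ⟨C, hC⟩ := hbdd k
    exact IsWeakSolution.integral_sum_sq_le (hsol k) (hyk k) hΛ hα (hcoer k)
      (fun i j => (hkL2 k i j).1) hC
  refine ⟨⟨_, henergy⟩, fun yh gh ns hns _ hweak _ => ?_⟩
  exact IsWeakSolution.of_tendsto (fun k => hsol (ns k)) (fun k => hkL2 (ns k)) hL2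
    (hstrong.comp hns.tendsto_atTop) (fun k => (hyk (ns k)).2.1) (fun k => henergy (ns k)) hweak

/-- stability of weak solutions: if admissible `A_k` (elliptic
symmetric parts, bounded skew parts) converge strongly in `L²` to `A₀`, and
`y_k` are the corresponding weak solutions of `−div(A_k∇y_k) = f`, then `{y_k}`
is bounded in `H¹₀(Ω)`, and any weak `H¹₀`-limit `ŷ` of a subsequence solves
the limit equation `−div(A₀∇ŷ) = f`. -/
theorem statement19 {N : ℕ} (hN : 2 ≤ N) (Ω : Set (Fin N → ℝ)) (hΩo : IsOpen Ω)
    (hΩb : Bornology.IsBounded Ω) (α β : ℝ) (hα : 0 < α) (hαβ : α ≤ β)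
    -- `f ∈ H⁻¹(Ω)`
    (Λ : ((Fin N → ℝ) → ℝ) → ℝ) (Cf : ℝ)
    (hΛ : ∀ φ, TestFun Ω φ →
      |Λ φ| ≤ Cf * Real.sqrt (∫ x in Ω, ∑ i, (pd i φ x) ^ 2))
    (Ak : ℕ → (Fin N → ℝ) → Matrix (Fin N) (Fin N) ℝ)
    (A₀ : (Fin N → ℝ) → Matrix (Fin N) (Fin N) ℝ)
    (hL2 : ∀ i j, MemLp (fun x => A₀ x i j) 2 (volume.restrict Ω))
    (hkL2 : ∀ k i j, MemLp (fun x => Ak k x i j) 2 (volume.restrict Ω))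
    (hell : ∀ k, ∀ᵐ x ∂(volume.restrict Ω), ∀ ξ : Fin N → ℝ,
      α * (∑ i, ξ i ^ 2) ≤
        dotProduct ξ (((2⁻¹ : ℝ) • (Ak k x + (Ak k x)ᵀ)).mulVec ξ) ∧
      dotProduct ξ (((2⁻¹ : ℝ) • (Ak k x + (Ak k x)ᵀ)).mulVec ξ) ≤
        β * (∑ i, ξ i ^ 2))
    (hskewbd : ∀ k, ∃ C : ℝ, ∀ᵐ x ∂(volume.restrict Ω), ∀ i j,
      |((2⁻¹ : ℝ) • (Ak k x - (Ak k x)ᵀ)) i j| ≤ C)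
    (hstrong : Tendsto
      (fun k => ∫ x in Ω, ∑ i, ∑ j, (Ak k x i j - A₀ x i j) ^ 2) atTop (𝓝 0))
    (yk : ℕ → (Fin N → ℝ) → ℝ) (gk : ℕ → (Fin N → ℝ) → Fin N → ℝ)
    (hyk : ∀ k, MemH10 Ω (yk k) (gk k))
    (hsol : ∀ k, ∀ φ, TestFun Ω φ →
      ∫ x in Ω, dotProduct (gradv φ x) ((Ak k x).mulVec (gk k x)) = Λ φ) :
    -- boundedness in H¹₀
    (∃ M : ℝ, ∀ k, ∫ x in Ω, ∑ i, (gk k x i) ^ 2 ≤ M) ∧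
    -- any weak H¹₀-limit of a subsequence solves the limit equation
    ∀ (yh : (Fin N → ℝ) → ℝ) (gh : (Fin N → ℝ) → Fin N → ℝ) (ns : ℕ → ℕ),
      StrictMono ns → MemH10 Ω yh gh →
      (∀ h : (Fin N → ℝ) → Fin N → ℝ,
        (∀ i, MemLp (fun x => h x i) 2 (volume.restrict Ω)) →
        Tendsto (fun k => ∫ x in Ω, dotProduct (gk (ns k) x) (h x)) atTop
          (𝓝 (∫ x in Ω, dotProduct (gh x) (h x)))) →
      (∀ w : (Fin N → ℝ) → ℝ, MemLp w 2 (volume.restrict Ω) →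
        Tendsto (fun k => ∫ x in Ω, yk (ns k) x * w x) atTop
          (𝓝 (∫ x in Ω, yh x * w x))) →
      ∀ φ, TestFun Ω φ →
        ∫ x in Ω, dotProduct (gradv φ x) ((A₀ x).mulVec (gh x)) = Λ φ :=
  statement19_general Ω α β hα Λ Cf hΛ Ak A₀ hL2 hkL2 hell hskewbd hstrong yk gk hyk hsol
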